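/- Let k ≥ 2 be an integer and let a : ℕ → ℂ be a bounded arithmetic function with k-th power invariant average under multiplications, with L = lim_{N→∞} (1/N) Σ_{n=1}^N a(n^k). Then lim_{N→∞} (1/N^{1/k}) Σ_{n ≤ N, n k-full} a(n) = c_k · L, where c_k = ∏_{p prime} (1 + Σ_{m=k+1}^{2k−1} p^{−m/k}). -/

import Mathlib

open Filter Topology Finset
open scoped Classical

/-- A natural number is `k`-full if `p ^ k` divides it for every prime `p` dividing it. -/
def IsKFull (k n : ℕ) : Prop := ∀ p : ℕ, Nat.Prime p → p ∣ n → p ^ k ∣ n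

namespace KFullAux

/-- membership in the "index set" B : positive and all prime exponents in [k+1, 2k-1]. -/
def InB (k m : ℕ) : Prop :=
  0 < m ∧ ∀ p : ℕ, p.Prime → p ∣ m →
    k + 1 ≤ m.factorization p ∧ m.factorization p ≤ 2 * k - 1

lemma InB.one (k : ℕ) : InB k 1 :=
  ⟨one_pos, fun p hp hd => absurd (Nat.dvd_one.mp hd) hp.ne_one⟩

lemma isKFull_iff {k n : ℕ} (hn : n ≠ 0) :
    IsKFull k n ↔ ∀ p, Nat.Prime p → p ∣ n → k ≤ n.factorization p := by
  unfold IsKFull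
  exact forall₂_congr fun p hp => forall_congr' fun _ =>
    hp.pow_dvd_iff_le_factorization hn

/-- exponent decomposition : α part -/
def ea (k e : ℕ) : ℕ := if e % k = 0 then e / k else e / k - 1
/-- exponent decomposition : β part -/
def eb (k e : ℕ) : ℕ := if e % k = 0 then 0 else e % k + k

lemma ea_eb_add {k e : ℕ} (hk : 2 ≤ k) (he : k ≤ e) : k * ea k e + eb k e = e := by
  have hk0 : 0 < k := by omega
  have hmod := Nat.div_add_mod e k
  unfold ea eb
  by_cases h : e % k = 0
  · simp [h]; omega
  · simp only [h, if_false]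
    have hd : 1 ≤ e / k := (Nat.one_le_div_iff hk0).mpr he
    have : k * (e / k - 1) + k = k * (e / k) := by
      rw [← Nat.mul_succ]; congr 1; omega
    omega

lemma eb_range {k e : ℕ} (hk : 2 ≤ k) :
    eb k e = 0 ∨ (k + 1 ≤ eb k e ∧ eb k e ≤ 2 * k - 1) := by
  unfold eb
  by_cases h : e % k = 0
  · simp [h]
  · right
    have h1 : e % k < k := Nat.mod_lt _ (by omega)
    have h2 : 1 ≤ e % k := Nat.one_le_iff_ne_zero.mpr h
    simp only [h, if_false]; omega

/-- uniqueness of the exponent decomposition -/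
lemma decomp_exp_unique {k α β α' β' : ℕ} (hk : 2 ≤ k)
    (hb : β = 0 ∨ (k + 1 ≤ β ∧ β ≤ 2 * k - 1))
    (hb' : β' = 0 ∨ (k + 1 ≤ β' ∧ β' ≤ 2 * k - 1))
    (h : k * α + β = k * α' + β') : α = α' ∧ β = β' := by
  have hk0 : 0 < k := by omega
  -- first show β = β'
  have hbb : β = β' := by
    rcases le_total β β' with hle | hle
    · -- k ∣ β' - β
      have h1 : k * α' ≤ k * α := by omega
      have hdvd : k ∣ β' - β := by
        have : β' - β = k * α - k * α' := by omega
        rw [this]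
        exact Nat.dvd_sub (dvd_mul_right k α) (dvd_mul_right k α')
      rcases hb with rfl | ⟨hb1, hb2⟩
      · rcases hb' with rfl | ⟨hb1', hb2'⟩
        · rfl
        · exfalso
          obtain ⟨c, hc⟩ := hdvd
          simp only [Nat.sub_zero] at hc
          rcases Nat.lt_or_ge c 2 with hc2 | hc2
          · interval_cases c <;> omega
          · have : 2 * k ≤ k * c := by
              calc 2 * k = k * 2 := by ring
              _ ≤ k * c := Nat.mul_le_mul_left _ hc2
            omega
      · rcases hb' with rfl | ⟨hb1', hb2'⟩
        · omega
        · obtain ⟨c, hc⟩ := hdvd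
          have hsub : β' - β ≤ k - 2 := by omega
          rcases Nat.eq_zero_or_pos c with rfl | hc1
          · omega
          · have : k ≤ k * c := Nat.le_mul_of_pos_right _ hc1
            omega
    · -- symmetric
      have hdvd : k ∣ β - β' := by
        have : β - β' = k * α' - k * α := by omega
        rw [this]
        exact Nat.dvd_sub (dvd_mul_right k α') (dvd_mul_right k α)
      rcases hb' with rfl | ⟨hb1', hb2'⟩
      · rcases hb with rfl | ⟨hb1, hb2⟩
        · rfl
        · exfalso
          obtain ⟨c, hc⟩ := hdvd
          simp only [Nat.sub_zero] at hc
          rcases Nat.lt_or_ge c 2 with hc2 | hc2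
          · interval_cases c <;> omega
          · have : 2 * k ≤ k * c := by
              calc 2 * k = k * 2 := by ring
              _ ≤ k * c := Nat.mul_le_mul_left _ hc2
            omega
      · rcases hb with rfl | ⟨hb1, hb2⟩
        · omega
        · obtain ⟨c, hc⟩ := hdvd
          rcases Nat.eq_zero_or_pos c with rfl | hc1
          · omega
          · have : k ≤ k * c := Nat.le_mul_of_pos_right _ hc1
            omega
  subst hbb
  have : k * α = k * α' := by omega
  exact ⟨Nat.eq_of_mul_eq_mul_left hk0 this, rfl⟩


lemma factorization_prod_pow {S : Finset ℕ} (hS : ∀ p ∈ S, Nat.Prime p) (t : ℕ → ℕ) (q : ℕ) :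
    (∏ p ∈ S, p ^ t p).factorization q = if q ∈ S then t q else 0 := by
  rw [Nat.factorization_prod (fun p hp => pow_ne_zero _ (hS p hp).pos.ne')]
  rw [Finsupp.finset_sum_apply]
  have : ∀ p ∈ S, (p ^ t p).factorization q = if p = q then t p else 0 := by
    intro p hp
    rw [(hS p hp).factorization_pow, Finsupp.single_apply]
  rw [Finset.sum_congr rfl this, Finset.sum_ite_eq' S q t]

lemma prod_pow_pos {S : Finset ℕ} (hS : ∀ p ∈ S, Nat.Prime p) (t : ℕ → ℕ) :
    0 < ∏ p ∈ S, p ^ t p :=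
  Finset.prod_pos fun p hp => pow_pos (hS p hp).pos _

/-- factorization of `q ^ k * m` at a prime -/
lemma fact_pow_mul {k q m : ℕ} (hq : 0 < q) (hm : 0 < m) (p : ℕ) :
    (q ^ k * m).factorization p = k * q.factorization p + m.factorization p := by
  rw [Nat.factorization_mul (pow_ne_zero _ hq.ne') hm.ne', Nat.factorization_pow]
  simp [mul_comm]

lemma eb_cases {k m : ℕ} (hm : InB k m) (p : ℕ) (hp : Nat.Prime p) :
    m.factorization p = 0 ∨
      (k + 1 ≤ m.factorization p ∧ m.factorization p ≤ 2 * k - 1) := by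
  by_cases hd : p ∣ m
  · exact Or.inr (hm.2 p hp hd)
  · exact Or.inl (Nat.factorization_eq_zero_of_not_dvd hd)

lemma kfull_of_decomp {k q m : ℕ} (hk : 2 ≤ k) (hq : 0 < q) (hm : InB k m) :
    IsKFull k (q ^ k * m) := by
  have hn : q ^ k * m ≠ 0 := (Nat.mul_pos (pow_pos hq _) hm.1).ne'
  rw [isKFull_iff hn]
  intro p hp hdvd
  rw [fact_pow_mul hq hm.1]
  have h1 : 1 ≤ (q ^ k * m).factorization p :=
    (hp.dvd_iff_one_le_factorization hn).mp hdvd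
  rw [fact_pow_mul hq hm.1] at h1
  rcases eb_cases hm p hp with h0 | ⟨h2, _⟩
  · have hv : q.factorization p ≠ 0 := fun h0' => by simp [h0', h0] at h1
    have : 1 ≤ q.factorization p := Nat.one_le_iff_ne_zero.mpr hv
    calc k = k * 1 := (mul_one k).symm
    _ ≤ k * q.factorization p := Nat.mul_le_mul_left _ this
    _ ≤ _ := Nat.le_add_right _ _
  · omega

lemma decomp_unique {k q m q' m' : ℕ} (hk : 2 ≤ k) (hq : 0 < q) (hq' : 0 < q')
    (hm : InB k m) (hm' : InB k m') (h : q ^ k * m = q' ^ k * m') : q = q' ∧ m = m' := by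
  have key : ∀ p : ℕ, q.factorization p = q'.factorization p ∧
      m.factorization p = m'.factorization p := by
    intro p
    by_cases hp : Nat.Prime p
    · have h1 := fact_pow_mul (k := k) hq hm.1 p
      have h2 := fact_pow_mul (k := k) hq' hm'.1 p
      rw [h] at h1
      exact decomp_exp_unique hk (eb_cases hm p hp) (eb_cases hm' p hp) (h1.symm.trans h2)
    · simp [Nat.factorization_eq_zero_of_not_prime _ hp]
  constructor
  · exact Nat.factorization_inj hq.ne' hq'.ne' (Finsupp.ext fun p => (key p).1)
  · exact Nat.factorization_inj hm.1.ne' hm'.1.ne' (Finsupp.ext fun p => (key p).2)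

lemma exists_decomp {k n : ℕ} (hk : 2 ≤ k) (hn : 0 < n) (h : IsKFull k n) :
    ∃ q m : ℕ, 0 < q ∧ InB k m ∧ n = q ^ k * m := by
  classical
  set S := n.factorization.support with hS
  have hSp : ∀ p ∈ S, Nat.Prime p := fun p hp => Nat.prime_of_mem_primeFactors hp
  have hke : ∀ p ∈ S, k ≤ n.factorization p := fun p hp =>
    (isKFull_iff hn.ne').mp h p (hSp p hp) (Nat.dvd_of_mem_primeFactors hp)
  refine ⟨∏ p ∈ S, p ^ ea k (n.factorization p), ∏ p ∈ S, p ^ eb k (n.factorization p),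
    prod_pow_pos hSp _, ?_, ?_⟩
  · refine ⟨prod_pow_pos hSp _, fun p hp hdvd => ?_⟩
    have hfp := factorization_prod_pow hSp (fun r => eb k (n.factorization r)) p
    have hpos : 1 ≤ (∏ r ∈ S, r ^ eb k (n.factorization r)).factorization p :=
      (hp.dvd_iff_one_le_factorization (prod_pow_pos hSp _).ne').mp hdvd
    rw [hfp] at hpos ⊢
    by_cases hpS : p ∈ S
    · simp only [hpS, if_true] at hpos ⊢
      rcases eb_range (e := n.factorization p) hk with h0 | hr
      · omega
      · exact hr
    · simp [hpS] at hpos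
  · -- n = q ^ k * m
    have : (∏ p ∈ S, p ^ ea k (n.factorization p)) ^ k *
        ∏ p ∈ S, p ^ eb k (n.factorization p)
        = ∏ p ∈ S, p ^ (k * ea k (n.factorization p) + eb k (n.factorization p)) := by
      rw [← Finset.prod_pow]
      rw [← Finset.prod_mul_distrib]
      refine Finset.prod_congr rfl fun p hp => ?_
      rw [← pow_mul, ← pow_add, mul_comm (ea k (n.factorization p)) k]
    rw [this]
    have : ∏ p ∈ S, p ^ (k * ea k (n.factorization p) + eb k (n.factorization p))
        = ∏ p ∈ S, p ^ n.factorization p :=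
      Finset.prod_congr rfl fun p hp => by rw [ea_eb_add hk (hke p hp)]
    rw [this]
    rw [show (∏ p ∈ S, p ^ n.factorization p) = n.factorization.prod (· ^ ·) from rfl]
    exact (Nat.factorization_prod_pow_eq_self hn.ne').symm


/-- the largest `q` with `q ^ k * m ≤ N` (or `0`). -/
def R (k N m : ℕ) : ℕ := Nat.findGreatest (fun q => q ^ k * m ≤ N) N

lemma R_le (k N m : ℕ) : R k N m ≤ N := Nat.findGreatest_le N

lemma R_spec {k : ℕ} (hk : 2 ≤ k) (N m : ℕ) : (R k N m) ^ k * m ≤ N := by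
  refine Nat.findGreatest_spec (P := fun q => q ^ k * m ≤ N) (m := 0) (Nat.zero_le N) ?_
  show 0 ^ k * m ≤ N
  rw [zero_pow (by omega : k ≠ 0), zero_mul]
  exact Nat.zero_le N

lemma le_R_iff {k N m q : ℕ} (hk : 2 ≤ k) (hq : 1 ≤ q) (hm : 1 ≤ m) :
    q ≤ R k N m ↔ q ^ k * m ≤ N := by
  constructor
  · intro h
    calc q ^ k * m ≤ (R k N m) ^ k * m :=
        Nat.mul_le_mul_right _ (Nat.pow_le_pow_left h _)
    _ ≤ N := R_spec hk N m
  · intro h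
    refine Nat.le_findGreatest ?_ h
    calc q ≤ q ^ k := Nat.le_self_pow (by omega) _
    _ ≤ q ^ k * m := Nat.le_mul_of_pos_right _ hm
    _ ≤ N := h

lemma R_lt {k N m : ℕ} (hk : 2 ≤ k) (hm : 1 ≤ m) (hN : R k N m + 1 ≤ N) :
    N < (R k N m + 1) ^ k * m := by
  by_contra hcon
  push_neg at hcon
  have := (le_R_iff hk (Nat.le_add_left 1 _) hm).mpr hcon
  omega

lemma tendsto_R {k m : ℕ} (hk : 2 ≤ k) (hm : 1 ≤ m) :
    Tendsto (fun N => R k N m) atTop atTop := by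
  rw [tendsto_atTop_atTop]
  intro b
  refine ⟨b ^ k * m, fun N hN => ?_⟩
  rcases Nat.eq_zero_or_pos b with rfl | hb
  · exact Nat.zero_le _
  · exact (le_R_iff hk hb hm).mpr hN

lemma sum_eq {k N : ℕ} (hk : 2 ≤ k) (a : ℕ → ℂ) :
    ∑ n ∈ (Finset.Icc 1 N).filter (IsKFull k), a n
      = ∑ m ∈ (Finset.Icc 1 N).filter (InB k), ∑ q ∈ Finset.Icc 1 (R k N m), a (q ^ k * m) := by
  rw [show (∑ m ∈ (Finset.Icc 1 N).filter (InB k), ∑ q ∈ Finset.Icc 1 (R k N m),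
      a (q ^ k * m))
      = ∑ x ∈ ((Finset.Icc 1 N).filter (InB k)).sigma (fun m => Finset.Icc 1 (R k N m)),
        a (x.2 ^ k * x.1) from
    (Finset.sum_sigma ((Finset.Icc 1 N).filter (InB k)) (fun m => Finset.Icc 1 (R k N m))
      (fun x => a (x.2 ^ k * x.1))).symm]
  refine (Finset.sum_bij (fun (x : (_ : ℕ) × ℕ) (_ : x ∈ _) => x.2 ^ k * x.1) ?_ ?_ ?_ ?_).symm
  · rintro ⟨m, q⟩ hx
    rw [Finset.mem_sigma, Finset.mem_filter, Finset.mem_Icc, Finset.mem_Icc] at hx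
    obtain ⟨⟨⟨hm1, hmN⟩, hmB⟩, hq1, hqR⟩ := hx
    rw [Finset.mem_filter, Finset.mem_Icc]
    refine ⟨⟨?_, (le_R_iff hk hq1 hm1).mp hqR⟩, kfull_of_decomp hk hq1 hmB⟩
    exact Nat.one_le_iff_ne_zero.mpr (Nat.mul_pos (pow_pos hq1 _) hm1).ne'
  · rintro ⟨m, q⟩ hx ⟨m', q'⟩ hx' hee
    rw [Finset.mem_sigma, Finset.mem_filter, Finset.mem_Icc, Finset.mem_Icc] at hx hx'
    obtain ⟨⟨⟨hm1, _⟩, hmB⟩, hq1, _⟩ := hx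
    obtain ⟨⟨⟨hm1', _⟩, hmB'⟩, hq1', _⟩ := hx'
    obtain ⟨h1, h2⟩ := decomp_unique hk hq1 hq1' hmB hmB' hee
    have hmm : m = m' := h2
    subst hmm
    have hqq : q = q' := h1
    subst hqq
    rfl
  · intro n hn
    rw [Finset.mem_filter, Finset.mem_Icc] at hn
    obtain ⟨⟨hn1, hnN⟩, hnF⟩ := hn
    obtain ⟨q, m, hq, hmB, rfl⟩ := exists_decomp hk hn1 hnF
    have hm1 : 1 ≤ m := hmB.1
    have hqm : q ^ k * m ≤ N := hnN
    refine ⟨⟨m, q⟩, ?_, rfl⟩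
    rw [Finset.mem_sigma, Finset.mem_filter, Finset.mem_Icc, Finset.mem_Icc]
    refine ⟨⟨⟨hm1, ?_⟩, hmB⟩, hq, (le_R_iff hk hq hm1).mpr hqm⟩
    calc m ≤ q ^ k * m := Nat.le_mul_of_pos_left _ (pow_pos hq _)
    _ ≤ N := hqm
  · rintro ⟨m, q⟩ _
    rfl


/-- the density function: `m ^ (-1/k)` on `B`, `0` elsewhere. -/
noncomputable def f (k : ℕ) (m : ℕ) : ℝ := if InB k m then (m : ℝ) ^ (-(1 : ℝ) / k) else 0

lemma f_nonneg (k m : ℕ) : 0 ≤ f k m := by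
  unfold f; split
  · exact Real.rpow_nonneg (Nat.cast_nonneg m) _
  · exact le_refl 0

lemma f_zero (k : ℕ) : f k 0 = 0 := by
  unfold f; rw [if_neg]; rintro ⟨h, -⟩; exact absurd h (lt_irrefl 0)

lemma f_one (k : ℕ) : f k 1 = 1 := by
  unfold f; rw [if_pos (InB.one k), Nat.cast_one, Real.one_rpow]

lemma InB_mul {k m n : ℕ} (h : Nat.Coprime m n) (hm : 0 < m) (hn : 0 < n) :
    InB k (m * n) ↔ InB k m ∧ InB k n := by
  have hfac : ∀ p : ℕ, (m * n).factorization p = m.factorization p + n.factorization p := by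
    intro p; rw [Nat.factorization_mul hm.ne' hn.ne']; rfl
  have hnd : ∀ p : ℕ, p.Prime → p ∣ m → ¬p ∣ n := by
    intro p hp hpm hpn
    exact hp.ne_one (Nat.dvd_one.mp (h ▸ Nat.dvd_gcd hpm hpn))
  constructor
  · rintro ⟨-, H⟩
    refine ⟨⟨hm, fun p hp hpm => ?_⟩, ⟨hn, fun p hp hpn => ?_⟩⟩
    · have h0 : n.factorization p = 0 :=
        Nat.factorization_eq_zero_of_not_dvd (hnd p hp hpm)
      have := H p hp (hpm.mul_right n)
      rw [hfac p, h0, add_zero] at this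
      exact this
    · have h0 : m.factorization p = 0 := by
        refine Nat.factorization_eq_zero_of_not_dvd fun hpm => hnd p hp hpm hpn
      have := H p hp (hpn.mul_left m)
      rw [hfac p, h0, zero_add] at this
      exact this
  · rintro ⟨⟨-, Hm⟩, ⟨-, Hn⟩⟩
    refine ⟨Nat.mul_pos hm hn, fun p hp hpd => ?_⟩
    rcases hp.dvd_mul.mp hpd with hpm | hpn
    · have h0 : n.factorization p = 0 :=
        Nat.factorization_eq_zero_of_not_dvd (hnd p hp hpm)
      rw [hfac p, h0, add_zero]
      exact Hm p hp hpm
    · have h0 : m.factorization p = 0 := by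
        refine Nat.factorization_eq_zero_of_not_dvd fun hpm => hnd p hp hpm hpn
      rw [hfac p, h0, zero_add]
      exact Hn p hp hpn

lemma f_mul {k : ℕ} {m n : ℕ} (h : Nat.Coprime m n) : f k (m * n) = f k m * f k n := by
  rcases Nat.eq_zero_or_pos m with rfl | hm
  · rw [Nat.coprime_zero_left] at h
    subst h; simp [f_zero, f_one]
  rcases Nat.eq_zero_or_pos n with rfl | hn
  · rw [Nat.coprime_zero_right] at h
    subst h; simp [f_zero, f_one]
  by_cases hB : InB k (m * n)
  · obtain ⟨h1, h2⟩ := (InB_mul h hm hn).mp hB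
    unfold f
    rw [if_pos hB, if_pos h1, if_pos h2, Nat.cast_mul,
      Real.mul_rpow (Nat.cast_nonneg m) (Nat.cast_nonneg n)]
  · have hc : ¬(InB k m ∧ InB k n) := fun hc => hB ((InB_mul h hm hn).mpr hc)
    unfold f
    rw [if_neg hB]
    rcases not_and_or.mp hc with h' | h' <;> simp [if_neg h']

lemma InB_prime_pow {k p : ℕ} (hk : 2 ≤ k) (hp : Nat.Prime p) {e : ℕ} :
    InB k (p ^ e) ↔ e = 0 ∨ (k + 1 ≤ e ∧ e ≤ 2 * k - 1) := by
  have hfe : (p ^ e).factorization p = e := by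
    rw [hp.factorization_pow, Finsupp.single_eq_same]
  constructor
  · rintro ⟨-, H⟩
    rcases Nat.eq_zero_or_pos e with rfl | he
    · exact Or.inl rfl
    · refine Or.inr ?_
      have := H p hp (dvd_pow_self p he.ne')
      rwa [hfe] at this
  · rintro (rfl | ⟨h1, h2⟩)
    · exact pow_zero p ▸ InB.one k
    · refine ⟨pow_pos hp.pos e, fun r hr hrd => ?_⟩
      have hrp : r = p := (Nat.prime_dvd_prime_iff_eq hr hp).mp (hr.dvd_of_dvd_pow hrd)
      subst hrp
      rw [hfe]
      exact ⟨h1, h2⟩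

lemma f_prime_pow {k p : ℕ} (hk : 2 ≤ k) (hp : Nat.Prime p) (e : ℕ) :
    f k (p ^ e) = if e = 0 then 1 else
      if k + 1 ≤ e ∧ e ≤ 2 * k - 1 then (p : ℝ) ^ (-(e : ℝ) / k) else 0 := by
  rcases Nat.eq_zero_or_pos e with rfl | he
  · simp [pow_zero, f_one]
  · rw [if_neg he.ne']
    by_cases hrange : k + 1 ≤ e ∧ e ≤ 2 * k - 1
    · rw [if_pos hrange]
      unfold f
      rw [if_pos ((InB_prime_pow hk hp).mpr (Or.inr hrange))]
      rw [Nat.cast_pow, ← Real.rpow_natCast (p : ℝ) e,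
        ← Real.rpow_mul (Nat.cast_nonneg p)]
      congr 1
      ring
    · rw [if_neg hrange]
      unfold f
      rw [if_neg]
      intro hB
      rcases (InB_prime_pow hk hp).mp hB with h0 | hr
      · omega
      · exact hrange hr

lemma tsum_f_prime_pow {k p : ℕ} (hk : 2 ≤ k) (hp : Nat.Prime p) :
    ∑' e : ℕ, f k (p ^ e)
      = 1 + ∑ j ∈ Finset.Icc (k + 1) (2 * k - 1), (p : ℝ) ^ (-(j : ℝ) / k) := by
  rw [tsum_eq_sum (s := insert 0 (Finset.Icc (k + 1) (2 * k - 1)))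
    (fun e he => ?_)]
  · rw [Finset.sum_insert (by rw [Finset.mem_Icc]; omega)]
    congr 1
    · rw [f_prime_pow hk hp 0, if_pos rfl]
    · refine Finset.sum_congr rfl fun j hj => ?_
      rw [Finset.mem_Icc] at hj
      rw [f_prime_pow hk hp j, if_neg (by omega), if_pos hj]
  · rw [Finset.mem_insert, Finset.mem_Icc] at he
    push_neg at he
    rw [f_prime_pow hk hp e, if_neg he.1, if_neg (by omega)]

lemma summable_f_prime_pow_norm {k p : ℕ} (hk : 2 ≤ k) (hp : Nat.Prime p) :
    Summable (fun e : ℕ => ‖f k (p ^ e)‖) := by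
  refine summable_of_ne_finset_zero (s := insert 0 (Finset.Icc (k + 1) (2 * k - 1)))
    (fun e he => ?_)
  rw [Finset.mem_insert, Finset.mem_Icc] at he
  push_neg at he
  rw [f_prime_pow hk hp e, if_neg he.1, if_neg (by omega), norm_zero]

lemma summable_rpow_primes {k j : ℕ} (hk : 2 ≤ k) (hj : k + 1 ≤ j) :
    Summable (fun p : Nat.Primes => (p : ℝ) ^ (-(j : ℝ) / k)) := by
  refine Nat.Primes.summable_rpow.mpr ?_
  have hk0 : (0 : ℝ) < k := by positivity
  rw [neg_div, neg_lt_neg_iff]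
  rw [lt_div_iff₀ hk0]
  rw [one_mul]
  exact_mod_cast by omega

lemma sum_le_tsum_primes {j k : ℕ}
    (hsumj : Summable (fun p : Nat.Primes => (p : ℝ) ^ (-(j : ℝ) / k))) (s : Finset Nat.Primes) :
    ∑ q ∈ s, (q : ℝ) ^ (-(j : ℝ) / k) ≤ ∑' p : Nat.Primes, (p : ℝ) ^ (-(j : ℝ) / k) :=
  hsumj.sum_le_tsum _ (fun q _ => Real.rpow_nonneg (Nat.cast_nonneg _) _)

lemma sum_f_le {k : ℕ} (hk : 2 ≤ k) (s : Finset ℕ) :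
    ∑ m ∈ s, f k m ≤ Real.exp (∑ j ∈ Finset.Icc (k + 1) (2 * k - 1),
      ∑' p : Nat.Primes, (p : ℝ) ^ (-(j : ℝ) / k)) := by
  classical
  set X := s.sup id + 1 with hX
  set P := Finset.range X with hP
  obtain ⟨hsummable, hhs⟩ :=
    EulerProduct.summable_and_hasSum_factoredNumbers_prod_filter_prime_tsum
      (f := f k) (f_one k) (fun {m n} h => f_mul h)
      (fun {p} hp => summable_f_prime_pow_norm hk hp) P
  set A := ∏ p ∈ P.filter Nat.Prime, ∑' e : ℕ, f k (p ^ e) with hA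
  have hsum_subtype : Summable (fun m : Nat.factoredNumbers P => f k m) :=
    hhs.summable
  have hind : Summable ((Nat.factoredNumbers P).indicator (f k)) := by
    rwa [← summable_subtype_iff_indicator]
  have step1 : ∑ m ∈ s, f k m ≤ A := by
    have hmem : ∀ m ∈ s.filter (InB k), m ∈ Nat.factoredNumbers P := by
      intro m hm
      rw [Finset.mem_filter] at hm
      refine Nat.mem_factoredNumbers'.mpr fun p hp hpd => ?_
      rw [hP, Finset.mem_range, hX]
      have h1 : p ≤ m := Nat.le_of_dvd hm.2.1 hpd
      have h2 : m ≤ s.sup id := Finset.le_sup (f := id) hm.1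
      omega
    have e1 : ∑ m ∈ s, f k m = ∑ m ∈ s.filter (InB k), f k m := by
      refine (Finset.sum_filter_of_ne fun m _ hne => ?_).symm
      by_contra hB
      exact hne (by unfold f; rw [if_neg hB])
    rw [e1]
    have e2 : ∑ m ∈ s.filter (InB k), f k m
        = ∑ m ∈ s.filter (InB k), (Nat.factoredNumbers P).indicator (f k) m :=
      Finset.sum_congr rfl fun m hm => (Set.indicator_of_mem (hmem m hm) _).symm
    rw [e2]
    calc ∑ m ∈ s.filter (InB k), (Nat.factoredNumbers P).indicator (f k) m
        ≤ ∑' m : ℕ, (Nat.factoredNumbers P).indicator (f k) m :=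
          Summable.sum_le_tsum _ (fun m _ => Set.indicator_apply_nonneg fun _ => f_nonneg k m) hind
      _ = ∑' m : Nat.factoredNumbers P, f k m := (_root_.tsum_subtype _ _).symm
      _ = A := hhs.tsum_eq
  refine step1.trans ?_
  have hAeq : A = ∏ p ∈ P.filter Nat.Prime,
      (1 + ∑ j ∈ Finset.Icc (k + 1) (2 * k - 1), (p : ℝ) ^ (-(j : ℝ) / k)) := by
    refine Finset.prod_congr rfl fun p hp => ?_
    exact tsum_f_prime_pow hk (Finset.mem_filter.mp hp).2
  rw [hAeq]
  have loc_nonneg : ∀ p : ℕ, 0 ≤ ∑ j ∈ Finset.Icc (k + 1) (2 * k - 1),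
      (p : ℝ) ^ (-(j : ℝ) / k) :=
    fun p => Finset.sum_nonneg fun j _ => Real.rpow_nonneg (Nat.cast_nonneg p) _
  calc ∏ p ∈ P.filter Nat.Prime,
      (1 + ∑ j ∈ Finset.Icc (k + 1) (2 * k - 1), (p : ℝ) ^ (-(j : ℝ) / k))
      ≤ ∏ p ∈ P.filter Nat.Prime,
        Real.exp (∑ j ∈ Finset.Icc (k + 1) (2 * k - 1), (p : ℝ) ^ (-(j : ℝ) / k)) := by
        refine Finset.prod_le_prod (fun p _ => by positivity) fun p _ => ?_
        rw [add_comm]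
        exact Real.add_one_le_exp _
    _ = Real.exp (∑ p ∈ P.filter Nat.Prime,
          ∑ j ∈ Finset.Icc (k + 1) (2 * k - 1), (p : ℝ) ^ (-(j : ℝ) / k)) :=
        (Real.exp_sum _ _).symm
    _ ≤ _ := by
        rw [Real.exp_le_exp, Finset.sum_comm]
        refine Finset.sum_le_sum fun j hj => ?_
        rw [Finset.mem_Icc] at hj
        have hsumj := summable_rpow_primes hk hj.1
        -- finite sum over primes in a finset ≤ tsum over all primes
        have : ∑ p ∈ P.filter Nat.Prime, ((p : ℕ) : ℝ) ^ (-(j : ℝ) / k)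
            = ∑ p ∈ (P.filter Nat.Prime).attach,
              ((⟨p.1, (Finset.mem_filter.mp p.2).2⟩ : Nat.Primes) : ℝ) ^ (-(j : ℝ) / k) := by
          rw [← Finset.sum_attach]
        rw [this]
        have hinj : Function.Injective
            (fun p : {x // x ∈ P.filter Nat.Prime} =>
              (⟨p.1, (Finset.mem_filter.mp p.2).2⟩ : Nat.Primes)) := by
          intro x y hxy
          simp only [Subtype.mk.injEq] at hxy
          exact Subtype.ext hxy
        calc ∑ p ∈ (P.filter Nat.Prime).attach,
            ((⟨p.1, (Finset.mem_filter.mp p.2).2⟩ : Nat.Primes) : ℝ) ^ (-(j : ℝ) / k)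
            = ∑ q ∈ (P.filter Nat.Prime).attach.image
                (fun p => (⟨p.1, (Finset.mem_filter.mp p.2).2⟩ : Nat.Primes)),
              (q : ℝ) ^ (-(j : ℝ) / k) := by
              rw [Finset.sum_image (fun x _ y _ h => hinj h)]
          _ ≤ ∑' p : Nat.Primes, (p : ℝ) ^ (-(j : ℝ) / k) :=
              sum_le_tsum_primes hsumj _

lemma summable_f {k : ℕ} (hk : 2 ≤ k) : Summable (f k) :=
  summable_of_sum_le (fun m => f_nonneg k m) (sum_f_le hk)

lemma summable_f_norm {k : ℕ} (hk : 2 ≤ k) : Summable (fun m => ‖f k m‖) :=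
  (summable_congr fun m => Real.norm_of_nonneg (f_nonneg k m)).mpr (summable_f hk)

lemma tprod_eq_tsum_f {k : ℕ} (hk : 2 ≤ k) :
    (∏' p : Nat.Primes, (1 + ∑ j ∈ Finset.Icc (k + 1) (2 * k - 1),
        ((p : ℕ) : ℝ) ^ (-(j : ℝ) / k))) = ∑' m, f k m := by
  rw [← EulerProduct.eulerProduct_tprod (f_one k) (fun {m n} h => f_mul h)
    (summable_f_norm hk) (f_zero k)]
  exact tprod_congr fun p => (tsum_f_prime_pow hk p.2).symm


lemma R_eq_zero {k N m : ℕ} (hk : 2 ≤ k) (hm : N < m) : R k N m = 0 := by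
  refine Nat.findGreatest_eq_zero_iff.mpr fun q h1 h2 hP => ?_
  have : m ≤ q ^ k * m := Nat.le_mul_of_pos_left _ (pow_pos h1 _)
  omega

lemma kroot_pow {k : ℕ} (hk : 2 ≤ k) {x : ℝ} (hx : 0 ≤ x) :
    (x ^ (k : ℕ)) ^ ((1 : ℝ) / k) = x := by
  rw [← Real.rpow_natCast x k, ← Real.rpow_mul hx]
  rw [mul_one_div, div_self (by positivity : (k : ℝ) ≠ 0), Real.rpow_one]

lemma div_rpow_eq {k N m : ℕ} (hk : 2 ≤ k) (hm : 1 ≤ m) :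
    (((N : ℝ)) / m) ^ ((1 : ℝ) / k)
      = (N : ℝ) ^ ((1 : ℝ) / k) * (m : ℝ) ^ (-(1 : ℝ) / k) := by
  have hm0 : (0 : ℝ) < m := by exact_mod_cast hm
  rw [Real.div_rpow (Nat.cast_nonneg N) (le_of_lt hm0)]
  rw [div_eq_mul_inv, ← Real.rpow_neg (le_of_lt hm0), neg_div]

lemma R_le_bound {k N m : ℕ} (hk : 2 ≤ k) (hm : 1 ≤ m) :
    (R k N m : ℝ) ≤ (N : ℝ) ^ ((1 : ℝ) / k) * (m : ℝ) ^ (-(1 : ℝ) / k) := by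
  have hm0 : (0 : ℝ) < m := by exact_mod_cast hm
  have h1 : ((R k N m : ℝ)) ^ (k : ℕ) * (m : ℝ) ≤ (N : ℝ) := by
    exact_mod_cast R_spec hk N m
  have h2 : ((R k N m : ℝ)) ^ (k : ℕ) ≤ (N : ℝ) / m := by
    rw [le_div_iff₀ hm0]; exact h1
  calc (R k N m : ℝ) = (((R k N m : ℝ)) ^ (k : ℕ)) ^ ((1 : ℝ) / k) :=
        (kroot_pow hk (Nat.cast_nonneg _)).symm
    _ ≤ ((N : ℝ) / m) ^ ((1 : ℝ) / k) :=
        Real.rpow_le_rpow (by positivity) h2 (by positivity)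
    _ = _ := div_rpow_eq hk hm

lemma tendsto_term {k m : ℕ} (hk : 2 ≤ k) (a : ℕ → ℂ) (L : ℂ) (hm : InB k m)
    (hinv : Tendsto (fun R : ℕ => (R : ℂ)⁻¹ * ∑ q ∈ Finset.Icc 1 R, a (q ^ k * m))
      atTop (nhds L)) :
    Tendsto (fun N : ℕ =>
        ((((N : ℝ) ^ ((1 : ℝ) / k) : ℝ)) : ℂ)⁻¹
          * ∑ q ∈ Finset.Icc 1 (R k N m), a (q ^ k * m))
      atTop (nhds (((f k m : ℝ) : ℂ) * L)) := by
  have hm1 : 1 ≤ m := hm.1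
  have hm0 : (0 : ℝ) < m := by exact_mod_cast hm1
  have hfm : f k m = (m : ℝ) ^ (-(1 : ℝ) / k) := if_pos hm
  have hR : Tendsto (fun N => R k N m) atTop atTop := tendsto_R hk hm1
  have hrootN : Tendsto (fun N : ℕ => ((N : ℝ)) ^ ((1 : ℝ) / k)) atTop atTop :=
    (tendsto_rpow_atTop (by positivity)).comp tendsto_natCast_atTop_atTop
  have hinvN : Tendsto (fun N : ℕ => (((N : ℝ)) ^ ((1 : ℝ) / k))⁻¹) atTop (nhds 0) :=
    tendsto_inv_atTop_zero.comp hrootN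
  -- eventual two-sided bound for the ratio
  set r : ℕ → ℝ := fun N => (R k N m : ℝ) / ((N : ℝ)) ^ ((1 : ℝ) / k) with hr_def
  have hev : ∀ᶠ N : ℕ in atTop,
      (m : ℝ) ^ (-(1 : ℝ) / k) - (((N : ℝ)) ^ ((1 : ℝ) / k))⁻¹ ≤ r N
      ∧ r N ≤ (m : ℝ) ^ (-(1 : ℝ) / k) ∧ 1 ≤ R k N m := by
    filter_upwards [eventually_ge_atTop (2 ^ k * m), eventually_ge_atTop 1]
      with N hN hN1
    have hNpos : (0 : ℝ) < ((N : ℝ)) ^ ((1 : ℝ) / k) := by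
      have : (0 : ℝ) < (N : ℝ) := by exact_mod_cast hN1
      positivity
    have hR2 : 2 ≤ R k N m := (le_R_iff hk (by omega) hm1).mpr hN
    have hRltN : R k N m + 1 ≤ N := by
      have h1 : R k N m < R k N m ^ k := by
        calc R k N m < R k N m ^ 2 := by nlinarith
        _ ≤ R k N m ^ k := Nat.pow_le_pow_right (by omega) hk
      have h2 : R k N m ^ k ≤ R k N m ^ k * m := Nat.le_mul_of_pos_right _ hm1
      have h3 := R_spec hk N m
      omega
    refine ⟨?_, ?_, by omega⟩
    · -- lower bound
      have hlt := R_lt hk hm1 hRltN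
      have hlt' : ((N : ℝ)) / m < ((R k N m : ℝ) + 1) ^ (k : ℕ) := by
        rw [div_lt_iff₀ hm0]
        exact_mod_cast hlt
      have hlt'' : ((N : ℝ) / m) ^ ((1 : ℝ) / k) < (R k N m : ℝ) + 1 := by
        calc ((N : ℝ) / m) ^ ((1 : ℝ) / k)
            < (((R k N m : ℝ) + 1) ^ (k : ℕ)) ^ ((1 : ℝ) / k) := by
              refine Real.rpow_lt_rpow (by positivity) hlt' (by positivity)
          _ = (R k N m : ℝ) + 1 := kroot_pow hk (by positivity)
      rw [div_rpow_eq hk hm1] at hlt''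
      rw [hr_def]
      rw [sub_le_iff_le_add, div_add' _ _ _ hNpos.ne']
      rw [le_div_iff₀ hNpos]
      calc ((m : ℝ) ^ (-(1 : ℝ) / k)) * ((N : ℝ)) ^ ((1 : ℝ) / k)
          ≤ (R k N m : ℝ) + 1 := by
            rw [mul_comm]
            exact le_of_lt hlt''
        _ = ((R k N m : ℝ) + (((N : ℝ)) ^ ((1 : ℝ) / k))⁻¹ * ((N : ℝ)) ^ ((1 : ℝ) / k)) := by
            rw [inv_mul_cancel₀ hNpos.ne']
    · -- upper bound
      rw [hr_def, div_le_iff₀ hNpos]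
      calc (R k N m : ℝ) ≤ (N : ℝ) ^ ((1 : ℝ) / k) * (m : ℝ) ^ (-(1 : ℝ) / k) :=
            R_le_bound hk hm1
        _ = (m : ℝ) ^ (-(1 : ℝ) / k) * (N : ℝ) ^ ((1 : ℝ) / k) := mul_comm _ _
  have hr_tendsto : Tendsto r atTop (nhds ((m : ℝ) ^ (-(1 : ℝ) / k))) := by
    refine tendsto_of_tendsto_of_tendsto_of_le_of_le'
      (g := fun N : ℕ => (m : ℝ) ^ (-(1 : ℝ) / k) - (((N : ℝ)) ^ ((1 : ℝ) / k))⁻¹)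
      (h := fun _ : ℕ => (m : ℝ) ^ (-(1 : ℝ) / k)) ?_ tendsto_const_nhds
      (hev.mono fun N h => h.1) (hev.mono fun N h => h.2.1)
    have h2 := (tendsto_const_nhds :
      Tendsto (fun _ : ℕ => (m : ℝ) ^ (-(1 : ℝ) / k)) atTop _).sub hinvN
    simpa using h2
  have hTR : Tendsto (fun N => (R k N m : ℂ)⁻¹
      * ∑ q ∈ Finset.Icc 1 (R k N m), a (q ^ k * m)) atTop (nhds L) := hinv.comp hR
  have hmain : Tendsto (fun N => ((r N : ℝ) : ℂ) * ((R k N m : ℂ)⁻¹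
      * ∑ q ∈ Finset.Icc 1 (R k N m), a (q ^ k * m))) atTop
      (nhds (((f k m : ℝ) : ℂ) * L)) := by
    rw [hfm]
    exact ((Complex.continuous_ofReal.tendsto _).comp hr_tendsto).mul hTR
  refine Tendsto.congr' ?_ hmain
  filter_upwards [hev, eventually_ge_atTop 1] with N h hN1
  obtain ⟨-, -, hR1⟩ := h
  have hNpos : (0 : ℝ) < ((N : ℝ)) ^ ((1 : ℝ) / k) := by
    have : (0 : ℝ) < (N : ℝ) := by exact_mod_cast hN1
    positivity
  have hRpos : (0 : ℝ) < (R k N m : ℝ) := by exact_mod_cast hR1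
  rw [hr_def]
  push_cast
  rw [div_eq_mul_inv]
  have hc1 : ((R k N m : ℕ) : ℂ) ≠ 0 := by exact_mod_cast hRpos.ne'
  have hc2 : ((((N : ℝ)) ^ ((1 : ℝ) / k) : ℝ) : ℂ) ≠ 0 := by
    exact_mod_cast hNpos.ne'
  field_simp

end KFullAux

open KFullAux in
theorem kfull_sum_asymptotic_of_kth_power_invariant_average
    (k : ℕ) (hk : 2 ≤ k)
    (a : ℕ → ℂ) (M : ℝ) (hbd : ∀ n, ‖a n‖ ≤ M) (L : ℂ)
    (havg : Tendsto (fun N : ℕ => (N : ℂ)⁻¹ * ∑ n ∈ Finset.Icc 1 N, a (n ^ k))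
      atTop (nhds L))
    (hinv : ∀ m : ℕ, 0 < m →
      Tendsto (fun N : ℕ => (N : ℂ)⁻¹ * ∑ n ∈ Finset.Icc 1 N, a (n ^ k * m))
        atTop (nhds L)) :
    Tendsto (fun N : ℕ =>
        (((N : ℝ) ^ ((1 : ℝ) / k) : ℝ) : ℂ)⁻¹ *
          ∑ n ∈ (Finset.Icc 1 N).filter (IsKFull k), a n)
      atTop
      (nhds (((∏' p : Nat.Primes,
          (1 + ∑ m ∈ Finset.Icc (k + 1) (2 * k - 1),
            ((p : ℕ) : ℝ) ^ (-(m : ℝ) / k)) : ℝ) : ℂ) * L)) := by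
  classical
  have hM0 : 0 ≤ M := le_trans (norm_nonneg (a 0)) (hbd 0)
  have key : Tendsto (fun N : ℕ => ∑' m : ℕ, (if InB k m then
        ((((N : ℝ) ^ ((1 : ℝ) / k) : ℝ)) : ℂ)⁻¹
          * ∑ q ∈ Finset.Icc 1 (R k N m), a (q ^ k * m) else 0)) atTop
      (nhds (∑' m : ℕ, ((f k m : ℝ) : ℂ) * L)) := by
    refine tendsto_tsum_of_dominated_convergence
      (bound := fun m => M * f k m)
      ((summable_f hk).mul_left M) (fun m => ?_) ?_
    · by_cases hm : InB k m
      · simp only [if_pos hm]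
        exact tendsto_term hk a L hm (hinv m hm.1)
      · simp only [if_neg hm]
        rw [show f k m = 0 from if_neg hm]
        simpa using tendsto_const_nhds
    · filter_upwards [eventually_ge_atTop 1] with N hN1
      intro m
      by_cases hm : InB k m
      · simp only [if_pos hm]
        have hNpos : (0 : ℝ) < (N : ℝ) ^ ((1 : ℝ) / k) := by
          have : (0 : ℝ) < (N : ℝ) := by exact_mod_cast hN1
          positivity
        have hfm : f k m = (m : ℝ) ^ (-(1 : ℝ) / k) := if_pos hm
        have h1 : ‖(((((N : ℝ) ^ ((1 : ℝ) / k)) : ℝ)) : ℂ)⁻¹‖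
            = ((N : ℝ) ^ ((1 : ℝ) / k))⁻¹ := by
          rw [norm_inv, Complex.norm_real, Real.norm_eq_abs, abs_of_pos hNpos]
        have h2 : ‖∑ q ∈ Finset.Icc 1 (R k N m), a (q ^ k * m)‖
            ≤ (R k N m : ℝ) * M := by
          calc ‖∑ q ∈ Finset.Icc 1 (R k N m), a (q ^ k * m)‖
              ≤ ∑ q ∈ Finset.Icc 1 (R k N m), ‖a (q ^ k * m)‖ := norm_sum_le _ _
            _ ≤ ∑ q ∈ Finset.Icc 1 (R k N m), M :=
                Finset.sum_le_sum fun q _ => hbd _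
            _ = (R k N m : ℝ) * M := by
                rw [Finset.sum_const, Nat.card_Icc, nsmul_eq_mul]
                rw [show R k N m + 1 - 1 = R k N m from by omega]
        rw [norm_mul, h1]
        calc ((N : ℝ) ^ ((1 : ℝ) / k))⁻¹ * ‖∑ q ∈ Finset.Icc 1 (R k N m), a (q ^ k * m)‖
            ≤ ((N : ℝ) ^ ((1 : ℝ) / k))⁻¹ * ((R k N m : ℝ) * M) :=
              mul_le_mul_of_nonneg_left h2 (by positivity)
          _ ≤ ((N : ℝ) ^ ((1 : ℝ) / k))⁻¹
              * (((N : ℝ) ^ ((1 : ℝ) / k) * (m : ℝ) ^ (-(1 : ℝ) / k)) * M) := by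
              refine mul_le_mul_of_nonneg_left ?_ (by positivity)
              exact mul_le_mul_of_nonneg_right (R_le_bound hk hm.1) hM0
          _ = M * f k m := by
              rw [hfm]
              field_simp
      · simp only [if_neg hm]
        rw [show f k m = 0 from if_neg hm]
        simp [hM0]
  have heq : ∀ᶠ N : ℕ in atTop,
      (((N : ℝ) ^ ((1 : ℝ) / k) : ℝ) : ℂ)⁻¹ *
        ∑ n ∈ (Finset.Icc 1 N).filter (IsKFull k), a n
      = ∑' m : ℕ, (if InB k m then
          ((((N : ℝ) ^ ((1 : ℝ) / k) : ℝ)) : ℂ)⁻¹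
            * ∑ q ∈ Finset.Icc 1 (R k N m), a (q ^ k * m) else 0) := by
    filter_upwards [eventually_ge_atTop 1] with N hN
    rw [sum_eq hk a, Finset.mul_sum]
    rw [tsum_eq_sum (s := (Finset.Icc 1 N).filter (InB k)) (fun m hm => ?_)]
    · exact Finset.sum_congr rfl fun m hm => by
        rw [if_pos (Finset.mem_filter.mp hm).2]
    · by_cases hB : InB k m
      · simp only [if_pos hB]
        have hmN : N < m := by
          rw [Finset.mem_filter, Finset.mem_Icc] at hm
          have hm1 : 1 ≤ m := hB.1
          by_contra hcon
          push_neg at hcon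
          exact hm ⟨⟨hm1, hcon⟩, hB⟩
        rw [R_eq_zero hk hmN]
        simp
      · simp only [if_neg hB]
  have hconst : (∑' m : ℕ, ((f k m : ℝ) : ℂ) * L)
      = (((∏' p : Nat.Primes, (1 + ∑ j ∈ Finset.Icc (k + 1) (2 * k - 1),
          ((p : ℕ) : ℝ) ^ (-(j : ℝ) / k))) : ℝ) : ℂ) * L := by
    rw [tsum_mul_right, ← Complex.ofReal_tsum, ← tprod_eq_tsum_f hk]
  rw [← hconst]
  exact Tendsto.congr' (EventuallyEq.symm heq) key
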